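/- Let λ be an antidominant composition, 0 ≤ r ≤ n−1, μ = π^r(λ), and let σ be a non-attacking filling of dg'(μ) with T(σ) = 0. Then for every box u ∈ dg'(μ), setting k = σ̂(d(u)) and S = {σ(v) : v ∈ arm(u)} ∪ {σ(u)}, one has: σ(u) = min{x ∈ S : x ≥ k} if the set {x ∈ S : x ≥ k} is nonempty, and σ(u) = min S otherwise. -/

import Mathlib

open Finset

namespace CO

/-- The column diagram `dg'(λ)` of a composition, as a finset of boxes `(i, j)`,
`1 ≤ i ≤ n`, `1 ≤ j ≤ λ_i`. -/
def dgF (n : ℕ) (lam : ℕ → ℕ) : Finset (ℕ × ℕ) :=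
  (Finset.Icc 1 n).biUnion fun i => (Finset.Icc 1 (lam i)).image fun j => (i, j)

/-- The augmented diagram `d̂g(λ)`: one extra box `(i, 0)` below each column. -/
def augF (n : ℕ) (lam : ℕ → ℕ) : Finset (ℕ × ℕ) :=
  dgF n lam ∪ (Finset.Icc 1 n).image fun i => (i, 0)

/-- The box `d(u)` directly below a box. -/
def dbox (u : ℕ × ℕ) : ℕ × ℕ := (u.1, u.2 - 1)

/-- The augmented filling `σ̂`: equal to `σ` on positive rows and to `i` on `(i, 0)`. -/
def aug (σ : ℕ × ℕ → ℕ) (u : ℕ × ℕ) : ℕ := if u.2 = 0 then u.1 else σ u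

/-- A filling takes values in `{1, …, n}` on the diagram. -/
def IsFilling (n : ℕ) (lam : ℕ → ℕ) (σ : ℕ × ℕ → ℕ) : Prop :=
  ∀ u ∈ dgF n lam, 1 ≤ σ u ∧ σ u ≤ n

/-- Attacking boxes: same row, or consecutive rows with the lower box to the right. -/
def Attack (u v : ℕ × ℕ) : Prop :=
  u ≠ v ∧ (u.2 = v.2 ∨ (u.2 = v.2 + 1 ∧ u.1 < v.1) ∨ (v.2 = u.2 + 1 ∧ v.1 < u.1))

/-- A non-attacking filling: `σ̂` takes distinct values on attacking pairs of the
augmented diagram. -/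
def NonAttacking (n : ℕ) (lam : ℕ → ℕ) (σ : ℕ × ℕ → ℕ) : Prop :=
  ∀ u ∈ augF n lam, ∀ v ∈ augF n lam, Attack u v → aug σ u ≠ aug σ v

/-- The arm of a box `u`. -/
def armF (n : ℕ) (lam : ℕ → ℕ) (u : ℕ × ℕ) : Finset (ℕ × ℕ) :=
  ((dgF n lam).filter fun v => v.1 < u.1 ∧ v.2 = u.2 ∧ lam v.1 ≤ lam u.1) ∪
    ((augF n lam).filter fun v => u.1 < v.1 ∧ v.2 + 1 = u.2 ∧ lam v.1 < lam u.1)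

/-- `a(u) = |arm(u)|`. -/
def armCard (n : ℕ) (lam : ℕ → ℕ) (u : ℕ × ℕ) : ℕ := (armF n lam u).card

/-- The number of inversions of `σ̂`: attacking pairs `u, u'` with `σ̂(u) < σ̂(u')`
and (same row with `u` to the left, or `u'` one row above `u` strictly to the left). -/
def invCard (n : ℕ) (lam : ℕ → ℕ) (σ : ℕ × ℕ → ℕ) : ℕ :=
  ((augF n lam ×ˢ augF n lam).filter fun p =>
    aug σ p.1 < aug σ p.2 ∧
      ((p.1.2 = p.2.2 ∧ p.1.1 < p.2.1) ∨ (p.2.2 = p.1.2 + 1 ∧ p.2.1 < p.1.1))).card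

/-- The descent set of `σ̂`. -/
def desF (n : ℕ) (lam : ℕ → ℕ) (σ : ℕ × ℕ → ℕ) : Finset (ℕ × ℕ) :=
  (dgF n lam).filter fun u => aug σ (dbox u) < aug σ u

/-- The statistic `coinv(σ̂)` (as an integer). -/
def coinv (n : ℕ) (lam : ℕ → ℕ) (σ : ℕ × ℕ → ℕ) : ℤ :=
  (∑ u ∈ dgF n lam, (armCard n lam u : ℤ)) - invCard n lam σ +
    (((Finset.Icc 1 n ×ˢ Finset.Icc 1 n).filter fun p =>
      p.1 < p.2 ∧ lam p.1 ≤ lam p.2).card : ℤ) +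
    ∑ u ∈ desF n lam σ, (armCard n lam u : ℤ)

/-- The statistic `T(σ)`. -/
def Tstat (n : ℕ) (lam : ℕ → ℕ) (σ : ℕ × ℕ → ℕ) : ℤ :=
  coinv n lam σ -
    ∑ u ∈ (dgF n lam).filter fun u => aug σ u ≠ aug σ (dbox u), (armCard n lam u : ℤ)

/-- Antidominant composition: `λ_1 ≤ ⋯ ≤ λ_n`. -/
def Antidominant (n : ℕ) (lam : ℕ → ℕ) : Prop :=
  ∀ i j, 1 ≤ i → i ≤ j → j ≤ n → lam i ≤ lam j

/-- Appropriate filling: non-attacking with `T(σ) = 0`. -/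
def Appropriate (n : ℕ) (lam : ℕ → ℕ) (σ : ℕ × ℕ → ℕ) : Prop :=
  IsFilling n lam σ ∧ NonAttacking n lam σ ∧ Tstat n lam σ = 0

/-- The operation `π` on compositions: `π(λ) = (λ_n + 1, λ_1, …, λ_{n-1})`. -/
def piComp (n : ℕ) (lam : ℕ → ℕ) : ℕ → ℕ :=
  fun i => if i = 1 then lam n + 1 else lam (i - 1)

/-- The operation `π` on boxes. -/
def piBox (n : ℕ) (u : ℕ × ℕ) : ℕ × ℕ :=
  if u.1 < n then (u.1 + 1, u.2) else (1, u.2 + 1)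

/-- Extension by zero of a function defined on the diagram. -/
def ext (n : ℕ) (lam : ℕ → ℕ) (f : {u // u ∈ dgF n lam} → ℕ) : ℕ × ℕ → ℕ :=
  fun u => if h : u ∈ dgF n lam then f ⟨u, h⟩ else 0

/-- `qstat(σ) = Σ (l(u) + 1)` over boxes `u` with `σ̂(u) < σ̂(d(u))`. -/
def qstat (n : ℕ) (lam : ℕ → ℕ) (σ : ℕ × ℕ → ℕ) : ℕ :=
  ∑ u ∈ (dgF n lam).filter fun u => aug σ u < aug σ (dbox u), (lam u.1 - u.2 + 1)


section Aux
variable {n : ℕ} {lam : ℕ → ℕ} {σ : ℕ × ℕ → ℕ}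

lemma mem_dgF {u : ℕ × ℕ} :
    u ∈ dgF n lam ↔ 1 ≤ u.1 ∧ u.1 ≤ n ∧ 1 ≤ u.2 ∧ u.2 ≤ lam u.1 := by
  simp only [dgF, Finset.mem_biUnion, Finset.mem_image, Finset.mem_Icc]
  constructor
  · rintro ⟨i, ⟨h1, h2⟩, j, ⟨h3, h4⟩, rfl⟩; exact ⟨h1, h2, h3, h4⟩
  · rintro ⟨h1, h2, h3, h4⟩; exact ⟨u.1, ⟨h1, h2⟩, u.2, ⟨h3, h4⟩, rfl⟩

lemma mem_augF {u : ℕ × ℕ} :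
    u ∈ augF n lam ↔ 1 ≤ u.1 ∧ u.1 ≤ n ∧ (u.2 = 0 ∨ u.2 ≤ lam u.1) := by
  simp only [augF, Finset.mem_union, mem_dgF, Finset.mem_image, Finset.mem_Icc]
  constructor
  · rintro (⟨h1, h2, h3, h4⟩ | ⟨i, ⟨h1, h2⟩, rfl⟩)
    · exact ⟨h1, h2, Or.inr h4⟩
    · exact ⟨h1, h2, Or.inl rfl⟩
  · rintro ⟨h1, h2, (h3 | h3)⟩
    · exact Or.inr ⟨u.1, ⟨h1, h2⟩, by rw [← h3]⟩
    · rcases Nat.eq_zero_or_pos u.2 with h | h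
      · exact Or.inr ⟨u.1, ⟨h1, h2⟩, by rw [← h]⟩
      · exact Or.inl ⟨h1, h2, h, h3⟩

/-- left part of the arm -/
def armL (n : ℕ) (lam : ℕ → ℕ) (u : ℕ × ℕ) : Finset (ℕ × ℕ) :=
  (dgF n lam).filter fun v => v.1 < u.1 ∧ v.2 = u.2 ∧ lam v.1 ≤ lam u.1
/-- right part of the arm -/
def armR (n : ℕ) (lam : ℕ → ℕ) (u : ℕ × ℕ) : Finset (ℕ × ℕ) :=
  (augF n lam).filter fun v => u.1 < v.1 ∧ v.2 + 1 = u.2 ∧ lam v.1 < lam u.1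

lemma armF_eq (n : ℕ) (lam : ℕ → ℕ) (u : ℕ × ℕ) :
    armF n lam u = armL n lam u ∪ armR n lam u := rfl

lemma disj_arm (u : ℕ × ℕ) : Disjoint (armL n lam u) (armR n lam u) := by
  rw [Finset.disjoint_left]
  intro v hv hv'
  simp only [armL, armR, Finset.mem_filter] at hv hv'
  omega

/-- triples of the left kind -/
def TL (n : ℕ) (lam : ℕ → ℕ) : Finset ((_ : ℕ × ℕ) × ℕ × ℕ) :=
  (dgF n lam).sigma (armL n lam)
/-- triples of the right kind -/
def TRt (n : ℕ) (lam : ℕ → ℕ) : Finset ((_ : ℕ × ℕ) × ℕ × ℕ) :=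
  (dgF n lam).sigma (armR n lam)

lemma inv_split (n : ℕ) (lam : ℕ → ℕ) (σ : ℕ × ℕ → ℕ) :
    invCard n lam σ =
      ((augF n lam ×ˢ augF n lam).filter fun p => aug σ p.1 < aug σ p.2 ∧
        (p.1.2 = p.2.2 ∧ p.1.1 < p.2.1) ∧ p.1.2 = 0 ∧ lam p.1.1 ≤ lam p.2.1).card +
      ((augF n lam ×ˢ augF n lam).filter fun p => aug σ p.1 < aug σ p.2 ∧
        (p.1.2 = p.2.2 ∧ p.1.1 < p.2.1) ∧ 1 ≤ p.1.2 ∧ lam p.1.1 ≤ lam p.2.1).card +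
      ((augF n lam ×ˢ augF n lam).filter fun p => aug σ p.1 < aug σ p.2 ∧
        (p.1.2 = p.2.2 ∧ p.1.1 < p.2.1) ∧ lam p.2.1 < lam p.1.1).card +
      ((augF n lam ×ˢ augF n lam).filter fun p => aug σ p.1 < aug σ p.2 ∧
        (p.2.2 = p.1.2 + 1 ∧ p.2.1 < p.1.1) ∧ lam p.2.1 ≤ lam p.1.1).card +
      ((augF n lam ×ˢ augF n lam).filter fun p => aug σ p.1 < aug σ p.2 ∧
        (p.2.2 = p.1.2 + 1 ∧ p.2.1 < p.1.1) ∧ lam p.1.1 < lam p.2.1).card := by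
  classical
  unfold invCard
  simp only [Finset.card_filter]
  rw [← Finset.sum_add_distrib, ← Finset.sum_add_distrib, ← Finset.sum_add_distrib,
    ← Finset.sum_add_distrib]
  refine Finset.sum_congr rfl fun p _ => ?_
  split_ifs <;> omega

lemma card_e0 :
    ((augF n lam ×ˢ augF n lam).filter fun p => aug σ p.1 < aug σ p.2 ∧
        (p.1.2 = p.2.2 ∧ p.1.1 < p.2.1) ∧ p.1.2 = 0 ∧ lam p.1.1 ≤ lam p.2.1).card
      = ((Finset.Icc 1 n ×ˢ Finset.Icc 1 n).filter fun p =>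
          p.1 < p.2 ∧ lam p.1 ≤ lam p.2).card := by
  refine Finset.card_nbij' (fun p => (p.1.1, p.2.1)) (fun q => ((q.1, 0), (q.2, 0))) ?_ ?_ ?_ ?_
  on_goal 1 => simp only [Set.MapsTo, Finset.mem_coe]
  on_goal 2 => simp only [Set.MapsTo, Finset.mem_coe]
  · rintro ⟨⟨x1, x2⟩, y1, y2⟩ hp
    simp only [Finset.mem_filter, Finset.mem_product, mem_augF, Finset.mem_Icc] at hp ⊢
    omega
  · rintro ⟨q1, q2⟩ hq
    simp only [Finset.mem_filter] at hq ⊢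
    simp [Finset.mem_filter, Finset.mem_product, mem_augF, Finset.mem_Icc, aug] at hq ⊢
    omega
  · rintro ⟨⟨x1, x2⟩, y1, y2⟩ hp
    obtain ⟨-, -, ⟨h1, -⟩, h2, -⟩ := Finset.mem_filter.mp hp
    have h1' : x2 = y2 := h1
    have h2' : x2 = 0 := h2
    refine Prod.ext (Prod.ext rfl ?_) (Prod.ext rfl ?_) <;> simp <;> omega
  · rintro ⟨q1, q2⟩ hq; rfl

lemma card_e1 :
    ((augF n lam ×ˢ augF n lam).filter fun p => aug σ p.1 < aug σ p.2 ∧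
        (p.1.2 = p.2.2 ∧ p.1.1 < p.2.1) ∧ 1 ≤ p.1.2 ∧ lam p.1.1 ≤ lam p.2.1).card
      = ((TL n lam).filter fun t => aug σ t.2 < aug σ t.1).card := by
  refine Finset.card_nbij' (fun p => ⟨p.2, p.1⟩) (fun t => (t.2, t.1)) ?_ ?_ ?_ ?_
  on_goal 1 => simp only [Set.MapsTo, Finset.mem_coe]
  on_goal 2 => simp only [Set.MapsTo, Finset.mem_coe]
  · rintro ⟨⟨x1, x2⟩, y1, y2⟩ hp
    simp only [TL, Finset.mem_filter, Finset.mem_product, Finset.mem_sigma, armL,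
      mem_dgF, mem_augF] at hp ⊢
    omega
  · rintro ⟨⟨u1, u2⟩, v1, v2⟩ ht
    simp only [TL, Finset.mem_filter, Finset.mem_product, Finset.mem_sigma, armL,
      mem_dgF, mem_augF] at ht ⊢
    omega
  · rintro p _; rfl
  · rintro t _; rfl

lemma card_e2 :
    ((augF n lam ×ˢ augF n lam).filter fun p => aug σ p.1 < aug σ p.2 ∧
        (p.1.2 = p.2.2 ∧ p.1.1 < p.2.1) ∧ lam p.2.1 < lam p.1.1).card
      = ((TRt n lam).filter fun t => aug σ (dbox t.1) < aug σ t.2).card := by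
  refine Finset.card_nbij' (fun p => ⟨(p.1.1, p.1.2 + 1), p.2⟩)
    (fun t => (dbox t.1, t.2)) ?_ ?_ ?_ ?_
  on_goal 1 => simp only [Set.MapsTo, Finset.mem_coe]
  on_goal 2 => simp only [Set.MapsTo, Finset.mem_coe]
  on_goal 4 => simp only [Set.RightInvOn, Set.LeftInvOn, Finset.mem_coe]
  · rintro ⟨⟨x1, x2⟩, y1, y2⟩ hp
    simp only [Finset.mem_filter] at hp ⊢
    simp only [TRt, Finset.mem_filter, Finset.mem_product, Finset.mem_sigma, armR,
      mem_dgF, mem_augF, dbox, Nat.add_sub_cancel] at hp ⊢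
    omega
  · rintro ⟨⟨u1, u2⟩, v1, v2⟩ ht
    simp only [Finset.mem_filter] at ht ⊢
    simp only [TRt, Finset.mem_filter, Finset.mem_product, Finset.mem_sigma, armR,
      mem_dgF, mem_augF, dbox] at ht ⊢
    omega
  · rintro ⟨⟨x1, x2⟩, y1, y2⟩ _
    simp [dbox]
  · rintro ⟨⟨u1, u2⟩, v1, v2⟩ ht
    simp only [TRt, Finset.mem_filter, Finset.mem_sigma, mem_dgF] at ht
    show (⟨(u1, u2 - 1 + 1), (v1, v2)⟩ : (_ : ℕ × ℕ) × ℕ × ℕ) = _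
    rw [Nat.sub_add_cancel ht.1.1.2.2.1]

lemma card_e3 :
    ((augF n lam ×ˢ augF n lam).filter fun p => aug σ p.1 < aug σ p.2 ∧
        (p.2.2 = p.1.2 + 1 ∧ p.2.1 < p.1.1) ∧ lam p.2.1 ≤ lam p.1.1).card
      = ((TL n lam).filter fun t => aug σ (dbox t.1) < aug σ t.2).card := by
  refine Finset.card_nbij' (fun p => ⟨(p.1.1, p.1.2 + 1), p.2⟩)
    (fun t => (dbox t.1, t.2)) ?_ ?_ ?_ ?_
  on_goal 1 => simp only [Set.MapsTo, Finset.mem_coe]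
  on_goal 2 => simp only [Set.MapsTo, Finset.mem_coe]
  on_goal 4 => simp only [Set.RightInvOn, Set.LeftInvOn, Finset.mem_coe]
  · rintro ⟨⟨x1, x2⟩, y1, y2⟩ hp
    simp only [Finset.mem_filter] at hp ⊢
    simp only [TL, Finset.mem_filter, Finset.mem_product, Finset.mem_sigma, armL,
      mem_dgF, mem_augF, dbox, Nat.add_sub_cancel] at hp ⊢
    omega
  · rintro ⟨⟨u1, u2⟩, v1, v2⟩ ht
    simp only [Finset.mem_filter] at ht ⊢
    simp only [TL, Finset.mem_filter, Finset.mem_product, Finset.mem_sigma, armL,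
      mem_dgF, mem_augF, dbox] at ht ⊢
    omega
  · rintro ⟨⟨x1, x2⟩, y1, y2⟩ _
    simp [dbox]
  · rintro ⟨⟨u1, u2⟩, v1, v2⟩ ht
    simp only [TL, Finset.mem_filter, Finset.mem_sigma, mem_dgF] at ht
    show (⟨(u1, u2 - 1 + 1), (v1, v2)⟩ : (_ : ℕ × ℕ) × ℕ × ℕ) = _
    rw [Nat.sub_add_cancel ht.1.1.2.2.1]

lemma card_e4 :
    ((augF n lam ×ˢ augF n lam).filter fun p => aug σ p.1 < aug σ p.2 ∧
        (p.2.2 = p.1.2 + 1 ∧ p.2.1 < p.1.1) ∧ lam p.1.1 < lam p.2.1).card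
      = ((TRt n lam).filter fun t => aug σ t.2 < aug σ t.1).card := by
  refine Finset.card_nbij' (fun p => ⟨p.2, p.1⟩) (fun t => (t.2, t.1)) ?_ ?_ ?_ ?_
  on_goal 1 => simp only [Set.MapsTo, Finset.mem_coe]
  on_goal 2 => simp only [Set.MapsTo, Finset.mem_coe]
  · rintro ⟨⟨x1, x2⟩, y1, y2⟩ hp
    simp only [TRt, Finset.mem_filter, Finset.mem_product, Finset.mem_sigma, armR,
      mem_dgF, mem_augF] at hp ⊢
    omega
  · rintro ⟨⟨u1, u2⟩, v1, v2⟩ ht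
    simp only [TRt, Finset.mem_filter, Finset.mem_product, Finset.mem_sigma, armR,
      mem_dgF, mem_augF] at ht ⊢
    omega
  · rintro p _; rfl
  · rintro t _; rfl

lemma sigma_filter_fst (s : Finset (ℕ × ℕ)) (t : ℕ × ℕ → Finset (ℕ × ℕ))
    (P : ℕ × ℕ → Prop) [DecidablePred P] :
    ((s.sigma t).filter fun p => P p.1) = (s.filter P).sigma t := by
  ext ⟨a, b⟩
  simp only [Finset.mem_filter, Finset.mem_sigma]
  tauto

lemma Tstat_eq (n : ℕ) (lam : ℕ → ℕ) (σ : ℕ × ℕ → ℕ) :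
    Tstat n lam σ =
      (∑ p ∈ TL n lam, ((1 : ℤ) - (if aug σ p.2 < aug σ p.1 then 1 else 0)
        - (if aug σ (dbox p.1) < aug σ p.2 then 1 else 0)
        - (if aug σ p.1 < aug σ (dbox p.1) then 1 else 0))) +
      (∑ p ∈ TRt n lam, ((1 : ℤ) - (if aug σ p.2 < aug σ p.1 then 1 else 0)
        - (if aug σ (dbox p.1) < aug σ p.2 then 1 else 0)
        - (if aug σ p.1 < aug σ (dbox p.1) then 1 else 0))) := by
  classical
  have harm : ∀ u, armCard n lam u = (armL n lam u).card + (armR n lam u).card := fun u => by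
    rw [armCard, armF_eq, Finset.card_union_of_disjoint (disj_arm u)]
  have hsum : ∀ (R : (_ : ℕ × ℕ) × ℕ × ℕ → Prop) (Q : ℕ × ℕ → Prop) [DecidablePred R]
      [DecidablePred Q], (∀ p : (_ : ℕ × ℕ) × ℕ × ℕ, R p ↔ Q p.1) →
      ∑ u ∈ (dgF n lam).filter Q, (armCard n lam u : ℤ)
        = (((TL n lam).filter R).card : ℤ) + (((TRt n lam).filter R).card : ℤ) := by
    intro R Q _ _ hRQ
    have h1 : (TL n lam).filter R = ((dgF n lam).filter Q).sigma (armL n lam) := by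
      rw [← sigma_filter_fst]
      exact Finset.filter_congr fun p _ => hRQ p
    have h2 : (TRt n lam).filter R = ((dgF n lam).filter Q).sigma (armR n lam) := by
      rw [← sigma_filter_fst]
      exact Finset.filter_congr fun p _ => hRQ p
    rw [h1, h2, Finset.card_sigma, Finset.card_sigma]
    push_cast
    rw [← Finset.sum_add_distrib]
    exact Finset.sum_congr rfl fun u _ => by rw [harm u]; push_cast; ring
  have hdg : ∑ u ∈ dgF n lam, (armCard n lam u : ℤ)
      = ((TL n lam).card : ℤ) + ((TRt n lam).card : ℤ) := by
    have h := hsum (fun _ => True) (fun _ => True) (fun _ => Iff.rfl)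
    simpa using h
  have hcb := hsum (fun p => aug σ p.1 < aug σ (dbox p.1))
    (fun u => aug σ u < aug σ (dbox u)) (fun _ => Iff.rfl)
  have hcomb : (∑ u ∈ desF n lam σ, (armCard n lam u : ℤ))
      - ∑ u ∈ (dgF n lam).filter (fun u => aug σ u ≠ aug σ (dbox u)), (armCard n lam u : ℤ)
      = - ∑ u ∈ (dgF n lam).filter (fun u => aug σ u < aug σ (dbox u)), (armCard n lam u : ℤ) := by
    have hspl : ((dgF n lam).filter fun u => aug σ u ≠ aug σ (dbox u))
        = desF n lam σ ∪ ((dgF n lam).filter fun u => aug σ u < aug σ (dbox u)) := by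
      rw [desF, ← Finset.filter_or]
      exact Finset.filter_congr fun u _ => by omega
    have hdj : Disjoint (desF n lam σ)
        ((dgF n lam).filter fun u => aug σ u < aug σ (dbox u)) := by
      rw [Finset.disjoint_left]; intro a ha hb
      simp only [desF, Finset.mem_filter] at ha hb; omega
    rw [hspl, Finset.sum_union hdj]; ring
  rw [Tstat, coinv, inv_split, card_e0, card_e1, card_e2, card_e3, card_e4]
  simp only [Finset.sum_sub_distrib, Finset.sum_const, nsmul_eq_mul, mul_one, Finset.sum_boole]
  push_cast
  linarith [hcomb, hcb, hdg]

lemma arm_vals_ne (hna : NonAttacking n lam σ) {u v : ℕ × ℕ} (hu : u ∈ dgF n lam)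
    (hv : v ∈ armF n lam u) : aug σ v ≠ aug σ u ∧ aug σ v ≠ aug σ (dbox u) := by
  obtain ⟨ha1, ha2, ha3, ha4⟩ := mem_dgF.mp hu
  have huA : u ∈ augF n lam := Finset.mem_union_left _ hu
  have hdA : dbox u ∈ augF n lam := by
    refine mem_augF.mpr ?_
    simp only [dbox]
    omega
  rw [armF_eq, Finset.mem_union] at hv
  rcases hv with hv | hv
  · obtain ⟨hvd, h1, h2, h3⟩ := Finset.mem_filter.mp hv
    have hvA : v ∈ augF n lam := Finset.mem_union_left _ hvd
    constructor
    · exact hna v hvA u huA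
        ⟨fun h => by rw [Prod.ext_iff] at h; omega, Or.inl h2⟩
    · exact hna v hvA (dbox u) hdA
        ⟨fun h => by rw [Prod.ext_iff] at h; simp only [dbox] at h; omega,
          Or.inr (Or.inl ⟨by show v.2 = u.2 - 1 + 1; omega, h1⟩)⟩
  · obtain ⟨hvA, h1, h2, h3⟩ := Finset.mem_filter.mp hv
    constructor
    · exact hna v hvA u huA
        ⟨fun h => by rw [Prod.ext_iff] at h; omega, Or.inr (Or.inr ⟨by omega, h1⟩)⟩
    · exact hna v hvA (dbox u) hdA
        ⟨fun h => by rw [Prod.ext_iff] at h; simp only [dbox] at h; omega,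
          Or.inl (by show v.2 = u.2 - 1; omega)⟩

end Aux

end CO

open CO in
/-- Proposition `ruleoffilling`. Let `λ` be antidominant,
`0 ≤ r ≤ n - 1`, `μ = π^r(λ)`, and let `σ` be a non-attacking filling of `dg'(μ)`
with `T(σ) = 0`. Then for every box `u ∈ dg'(μ)`, with `k = σ̂(d(u))` and
`S = {σ(v) : v ∈ arm(u)} ∪ {σ(u)}`, the value `σ(u)` equals
`min {x ∈ S : x ≥ k}` if that set is nonempty, and `min S` otherwise. -/
theorem rule_of_filling (n : ℕ) (hn : 1 ≤ n) (lam : ℕ → ℕ)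
    (hanti : Antidominant n lam) (r : ℕ) (hr : r ≤ n - 1)
    (mu : ℕ → ℕ) (hmu : mu = (piComp n)^[r] lam)
    (σ : ℕ × ℕ → ℕ) (hfill : IsFilling n mu σ) (hna : NonAttacking n mu σ)
    (hT : Tstat n mu σ = 0) :
    ∀ u ∈ dgF n mu,
      ({x ∈ aug σ '' ↑(armF n mu u) ∪ {σ u} | aug σ (dbox u) ≤ x}.Nonempty →
        σ u = sInf {x ∈ aug σ '' ↑(armF n mu u) ∪ {σ u} | aug σ (dbox u) ≤ x}) ∧
      (¬ {x ∈ aug σ '' ↑(armF n mu u) ∪ {σ u} | aug σ (dbox u) ≤ x}.Nonempty →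
        σ u = sInf (aug σ '' ↑(armF n mu u) ∪ {σ u})) := by
  classical
  have hkey : ∀ u ∈ dgF n mu, ∀ v ∈ armF n mu u,
      ((1 : ℤ) - (if aug σ v < aug σ u then 1 else 0)
        - (if aug σ (dbox u) < aug σ v then 1 else 0)
        - (if aug σ u < aug σ (dbox u) then 1 else 0)) = 0 := by
    have hT' := Tstat_eq n mu σ
    rw [hT] at hT'
    have hnpL : ∀ p ∈ TL n mu, ((1 : ℤ) - (if aug σ p.2 < aug σ p.1 then 1 else 0)
        - (if aug σ (dbox p.1) < aug σ p.2 then 1 else 0)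
        - (if aug σ p.1 < aug σ (dbox p.1) then 1 else 0)) ≤ 0 := by
      rintro ⟨u, v⟩ hp
      obtain ⟨hu, hv⟩ := Finset.mem_sigma.mp hp
      have hne := (arm_vals_ne hna hu
        (by rw [armF_eq, Finset.mem_union]; exact Or.inl hv)).2
      split_ifs <;> omega
    have hnpR : ∀ p ∈ TRt n mu, ((1 : ℤ) - (if aug σ p.2 < aug σ p.1 then 1 else 0)
        - (if aug σ (dbox p.1) < aug σ p.2 then 1 else 0)
        - (if aug σ p.1 < aug σ (dbox p.1) then 1 else 0)) ≤ 0 := by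
      rintro ⟨u, v⟩ hp
      obtain ⟨hu, hv⟩ := Finset.mem_sigma.mp hp
      have hne := (arm_vals_ne hna hu
        (by rw [armF_eq, Finset.mem_union]; exact Or.inr hv)).2
      split_ifs <;> omega
    have h1 := Finset.sum_nonpos hnpL
    have h2 := Finset.sum_nonpos hnpR
    have hzL := (Finset.sum_eq_zero_iff_of_nonpos hnpL).mp (by linarith)
    have hzR := (Finset.sum_eq_zero_iff_of_nonpos hnpR).mp (by linarith)
    intro u hu v hv
    rw [armF_eq, Finset.mem_union] at hv
    rcases hv with hv | hv
    · exact hzL ⟨u, v⟩ (Finset.mem_sigma.mpr ⟨hu, hv⟩)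
    · exact hzR ⟨u, v⟩ (Finset.mem_sigma.mpr ⟨hu, hv⟩)
  intro u hu
  obtain ⟨ha1, ha2, ha3, ha4⟩ := mem_dgF.mp hu
  have hauu : aug σ u = σ u := by rw [aug, if_neg (by omega)]
  have hfact : ∀ v ∈ armF n mu u,
      (aug σ (dbox u) ≤ σ u → ¬(aug σ (dbox u) ≤ aug σ v ∧ aug σ v < σ u)) ∧
      (σ u < aug σ (dbox u) → σ u < aug σ v ∧ aug σ v < aug σ (dbox u)) := by
    intro v hv
    have h0 := hkey u hu v hv
    obtain ⟨hne1, hne2⟩ := arm_vals_ne hna hu hv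
    rw [hauu] at h0 hne1
    constructor <;> intro h <;> split_ifs at h0 <;> omega
  constructor
  · intro hne_set
    by_cases hkc : aug σ (dbox u) ≤ σ u
    · refine le_antisymm (le_csInf hne_set ?_) (Nat.sInf_le ⟨Or.inr rfl, hkc⟩)
      rintro x ⟨hxS, hkx⟩
      rcases hxS with ⟨v, hv, rfl⟩ | hx
      · have h := (hfact v (Finset.mem_coe.mp hv)).1 hkc
        omega
      · rw [Set.mem_singleton_iff] at hx
        omega
    · exfalso
      obtain ⟨x, hxS, hkx⟩ := hne_set
      rcases hxS with ⟨v, hv, rfl⟩ | hx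
      · have h := (hfact v (Finset.mem_coe.mp hv)).2 (by omega)
        omega
      · rw [Set.mem_singleton_iff] at hx
        omega
  · intro hempty
    by_cases hkc : aug σ (dbox u) ≤ σ u
    · exact absurd ⟨σ u, Or.inr rfl, hkc⟩ hempty
    · refine le_antisymm (le_csInf ⟨σ u, Or.inr rfl⟩ ?_) (Nat.sInf_le (Or.inr rfl))
      rintro x (⟨v, hv, rfl⟩ | hx)
      · have h := (hfact v (Finset.mem_coe.mp hv)).2 (by omega)
        omega
      · rw [Set.mem_singleton_iff] at hx
        omega
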